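/- Let (n_1, …, n_k) ∈ ℕ^k be syllable sizes, with SI/NSI syllable labels given by the combinatorial model applied to the word (n_1, …, n_k) (the labels depend only on the sizes |a_i|). Suppose the total number of SI crossings is even, the total number of NSI crossings is even, and the last maximal run of NSI syllables contains at least one crossing. Then, in the resolution game on (n_1, …, n_k), the second player can force the resulting word w = (s_1, …, s_k) to satisfy: w ≈ (2), or w ≈ (−2), or w ≈ (2, c) or w ≈ (−2, c) for some integer c. -/

import Mathlib

/-- The three connectivity states of a partially built rational tangle:
`H = {NW–NE, SW–SE}`, `V = {NW–SW, NE–SE}`, `X = {NW–SE, NE–SW}`. -/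
inductive TState : Type
  | H
  | V
  | X
  deriving DecidableEq

/-- Effect of a bottom crossing (a twist of SW and SE) on the connectivity state. -/
def bstep : TState → TState
  | .H => .H
  | .V => .X
  | .X => .V

/-- Effect of a right crossing (a twist of NE and SE) on the connectivity state. -/
def rstep : TState → TState
  | .V => .V
  | .H => .X
  | .X => .H

/-- `step true` is a bottom crossing, `step false` is a right crossing. -/
def step : Bool → TState → TState
  | true => bstep
  | false => rstep

/-- The twist direction of the (0-based) `i`-th syllable: bottom iff `i` is even
(1-based odd syllables are bottom twists). -/
def sylDir (i : ℕ) : Bool := decide (i % 2 = 0)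

/-- The state in which a crossing of the (0-based) `i`-th syllable is a self-intersection:
`H` for bottom syllables, `V` for right syllables. -/
def siState (i : ℕ) : TState := if i % 2 = 0 then TState.H else TState.V

/-- Process a list of syllables starting from state `s`; the Boolean `b` records
whether the next syllable is a bottom syllable. Each syllable `a` applies
`|a|` crossings of the appropriate direction. -/
def runWord : List ℤ → Bool → TState → TState
  | [], _, s => s
  | a :: t, b, s => runWord t (!b) ((step b)^[a.natAbs] s)

/-- The connectivity state at the start of the (0-based) `i`-th syllable of the word `w`
(a rational tangle word starts in state `V`). -/
def stateAt (w : List ℤ) (i : ℕ) : TState := runWord (w.take i) true TState.V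

/-- The (0-based) `i`-th syllable of `w` is an SI syllable. -/
def IsSISyl (w : List ℤ) (i : ℕ) : Prop := stateAt w i = siState i

instance (w : List ℤ) (i : ℕ) : Decidable (IsSISyl w i) :=
  inferInstanceAs (Decidable (_ = _))

/-- `IsNSIRun w l r` : the syllables with (0-based) indices in `[l, r)` form a maximal run
of NSI syllables of `w`. -/
def IsNSIRun (w : List ℤ) (l r : ℕ) : Prop :=
  l < r ∧ r ≤ w.length ∧ (∀ j, l ≤ j → j < r → ¬ IsSISyl w j) ∧
    (l = 0 ∨ IsSISyl w (l - 1)) ∧ (r = w.length ∨ IsSISyl w r)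

/-- The last maximal run of NSI syllables: a maximal run such that every later syllable
is an SI syllable. -/
def IsLastNSIRun (w : List ℤ) (l r : ℕ) : Prop :=
  IsNSIRun w l r ∧ ∀ j, r ≤ j → j < w.length → IsSISyl w j

/-- Run shape (a): a single even syllable. -/
def RunA (w : List ℤ) (l r : ℕ) : Prop := r = l + 1 ∧ Even (w.getD l 0)

/-- Run shape (b): two consecutive odd syllables. -/
def RunB (w : List ℤ) (l r : ℕ) : Prop :=
  r = l + 2 ∧ Odd (w.getD l 0) ∧ Odd (w.getD (l + 1) 0)

/-- Run shape (c): an odd syllable, then a nonempty string of even syllables,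
then a final odd syllable. -/
def RunC (w : List ℤ) (l r : ℕ) : Prop :=
  l + 3 ≤ r ∧ Odd (w.getD l 0) ∧ Odd (w.getD (r - 1) 0) ∧
    ∀ j, l < j → j < r - 1 → Even (w.getD j 0)

/-- Run shape (a'): a single odd syllable. -/
def RunA' (w : List ℤ) (l r : ℕ) : Prop := r = l + 1 ∧ Odd (w.getD l 0)

/-- Run shape (b'): an odd syllable followed by a nonempty string of even syllables. -/
def RunB' (w : List ℤ) (l r : ℕ) : Prop :=
  l + 2 ≤ r ∧ Odd (w.getD l 0) ∧ ∀ j, l < j → j < r → Even (w.getD j 0)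

/-- The number of NSI crossings of the word `w`: the sum of `|a_i|` over the NSI
syllables `a_i` of `w`. -/
def nsiCrossings (w : List ℤ) : ℕ :=
  ∑ i ∈ Finset.range w.length, if IsSISyl w i then 0 else (w.getD i 0).natAbs

/-- The number of SI crossings of the word `w`: the sum of `|a_i|` over the SI
syllables `a_i` of `w`. -/
def siCrossings (w : List ℤ) : ℕ :=
  ∑ i ∈ Finset.range w.length, if IsSISyl w i then (w.getD i 0).natAbs else 0

/-- Tangle-word reduction: the smallest equivalence relation on nonempty finite
sequences of integers closed under the moves (0)–(5). -/
inductive TEq : List ℤ → List ℤ → Prop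
  /-- (0) `(a_1,…,a_k,0) ≈ (a_1,…,a_k)` -/
  | move0 (l : List ℤ) (h : l ≠ []) : TEq (l ++ [0]) l
  /-- (1) `(a_1,…,a_i,0,a_{i+1},…,a_n) ≈ (a_1,…,a_{i-1},a_i+a_{i+1},a_{i+2},…,a_n)` -/
  | move1 (l r : List ℤ) (a b : ℤ) : TEq (l ++ a :: 0 :: b :: r) (l ++ (a + b) :: r)
  /-- (2) `(a_1,…,a_i,0,0,a_{i+1},…,a_n) ≈ (a_1,…,a_i,a_{i+1},…,a_n)` -/
  | move2 (l r : List ℤ) (h : l ++ r ≠ []) : TEq (l ++ 0 :: 0 :: r) (l ++ r)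
  /-- (3) `(0,a+1,a_2,…,a_n) ≈ (0,a,a_2,…,a_n)` -/
  | move3 (a : ℤ) (r : List ℤ) : TEq (0 :: (a + 1) :: r) (0 :: a :: r)
  /-- (4) `(1,a,a_2,…,a_n) ≈ (a+1,a_2,…,a_n)` -/
  | move4 (a : ℤ) (r : List ℤ) : TEq (1 :: a :: r) ((a + 1) :: r)
  /-- (5) `(-1,a,a_2,…,a_n) ≈ (a-1,a_2,…,a_n)` -/
  | move5 (a : ℤ) (r : List ℤ) : TEq ((-1) :: a :: r) ((a - 1) :: r)
  | refl (l : List ℤ) : TEq l l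
  | symm {l₁ l₂ : List ℤ} : TEq l₁ l₂ → TEq l₂ l₁
  | trans {l₁ l₂ l₃ : List ℤ} : TEq l₁ l₂ → TEq l₂ l₃ → TEq l₁ l₃

section SignGame

variable {C : Type*} [Fintype C]

/-- A play of the sign-assignment game is a list of moves, each assigning a sign to a
crossing; it is legal if no crossing is chosen twice and every sign is `+1` or `-1`. -/
def LegalPlay (p : List (C × ℤ)) : Prop :=
  (p.map Prod.fst).Nodup ∧ ∀ m ∈ p, m.2 = 1 ∨ m.2 = -1

/-- The play `p` follows the strategy `σ` of the player who moves at all positions whose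
number of prior moves is congruent to `parity` mod 2 (`parity = 0`: first player;
`parity = 1`: second player). -/
def Follows (parity : ℕ) (σ : List (C × ℤ) → C × ℤ) (p : List (C × ℤ)) : Prop :=
  ∀ (i : ℕ) (hi : i < p.length), i % 2 = parity → p.get ⟨i, hi⟩ = σ (p.take i)

/-- The strategy `σ` always produces a legal move (an unchosen crossing with sign `±1`)
at the positions where its player is to move. -/
def LegalStrat (parity : ℕ) (σ : List (C × ℤ) → C × ℤ) : Prop :=
  ∀ p : List (C × ℤ), LegalPlay p → p.length % 2 = parity → p.length < Fintype.card C →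
    (σ p).1 ∉ p.map Prod.fst ∧ ((σ p).2 = 1 ∨ (σ p).2 = -1)

/-- The player moving at positions of parity `parity` can force the predicate `P` on
complete plays: they have a legal strategy such that every complete legal play following
it satisfies `P`. -/
def CanForce (parity : ℕ) (P : List (C × ℤ) → Prop) : Prop :=
  ∃ σ : List (C × ℤ) → C × ℤ, LegalStrat parity σ ∧
    ∀ p : List (C × ℤ), LegalPlay p → p.length = Fintype.card C → Follows parity σ p → P p

end SignGame

/-- The crossings of the resolution game on syllable sizes `n = (n_1, …, n_k)`:
pairs `(i, j)` with `i` a syllable index and `j < n_i`. -/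
abbrev Cr (n : List ℕ) : Type := Σ i : Fin n.length, Fin (n.get i)

/-- The resulting word `(s_1, …, s_k)` of a complete play of the resolution game:
`s_i` is the sum of the signs assigned to the crossings of the `i`-th syllable. -/
def result (n : List ℕ) (p : List (Cr n × ℤ)) : List ℤ :=
  (List.finRange n.length).map fun i =>
    ((p.filter fun m => decide (m.1.1 = i)).map Prod.snd).sum

/-- The tangle word associated to the syllable sizes `(n_1, …, n_k)`
(SI/NSI labels depend only on the sizes `|a_i|`). -/
def natWord (n : List ℕ) : List ℤ := n.map fun x => (x : ℤ)

/-!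
The second player answers every move by signing the partner crossing, with the same or the
opposite sign. Within a syllable the crossings `2t` and `2t + 1` are partners with opposite
signs, so an even syllable resolves to `0` and an odd one to the sign `±1` of its last
crossing. The last crossings of odd syllables are paired in increasing order, SI with SI and
NSI with NSI; this is possible since both crossing counts are even.

The connectivity state is `X` exactly after an odd number of odd NSI syllables. Hence a maximal
NSI run is either a single even syllable or an odd syllable, even ones, and a second odd
syllable, and the two odd syllables of a run are partners. Given opposite signs, every run but
the last resolves to `(0)` or `(s, 0, …, 0, -s)` and cancels together with the SI syllable
after it. The last run gets equal signs on its two odd syllables, or on the first two crossings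
of its single even syllable (which has at least two crossings), so it resolves to
`(s, 0, …, 0, s) ≈ (2s)` or to `(±2)`, followed by at most one SI syllable.
-/

def ReducesToTwo (w : List ℤ) : Prop :=
  TEq w [2] ∨ TEq w [-2] ∨ ∃ c : ℤ, TEq w [2, c] ∨ TEq w [-2, c]

namespace TEq

theorem zero_cons_cons (a : ℤ) {rest : List ℤ} (h : rest ≠ []) : TEq (0 :: a :: rest) rest := by
  have shift : ∀ b : ℤ, TEq (0 :: b :: rest) (0 :: 0 :: rest) := by
    intro b
    induction b using Int.induction_on with
    | zero => exact refl _
    | succ k ih => exact (move3 (k : ℤ) rest).trans ih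
    | pred k ih =>
      have step := move3 (-(k : ℤ) - 1) rest
      rw [sub_add_cancel] at step
      exact step.symm.trans ih
  exact (shift a).trans (by simpa using move2 [] rest (by simpa using h))

theorem unit_cons {s : ℤ} (hs : s = 1 ∨ s = -1) (a : ℤ) (rest : List ℤ) :
    TEq (s :: a :: rest) ((a + s) :: rest) := by
  rcases hs with rfl | rfl
  · exact move4 a rest
  · simpa [sub_eq_add_neg] using move5 a rest

theorem unit_replicate_zero {s : ℤ} (hs : s = 1 ∨ s = -1) (j : ℕ) (rest : List ℤ) :
    TEq (s :: (List.replicate j 0 ++ rest)) (s :: rest) := by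
  induction j with
  | zero => exact refl _
  | succ j ih =>
    have step := unit_cons hs 0 (List.replicate j 0 ++ rest)
    rw [zero_add] at step
    exact step.trans ih

end TEq

theorem ReducesToTwo.of_teq {u v : List ℤ} (h : TEq u v) (hv : ReducesToTwo v) :
    ReducesToTwo u := by
  rcases hv with h' | h' | ⟨c, h' | h'⟩
  exacts [Or.inl (h.trans h'), Or.inr (Or.inl (h.trans h')),
    Or.inr (Or.inr ⟨c, Or.inl (h.trans h')⟩), Or.inr (Or.inr ⟨c, Or.inr (h.trans h')⟩)]

theorem reducesToTwo_two_cons {x : ℤ} (hx : x = 2 ∨ x = -2) {t : List ℤ} (ht : t.length ≤ 1) :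
    ReducesToTwo (x :: t) := by
  rcases t with _ | ⟨c, _ | ⟨d, t⟩⟩
  · rcases hx with rfl | rfl
    exacts [Or.inl (.refl _), Or.inr (Or.inl (.refl _))]
  · rcases hx with rfl | rfl
    exacts [Or.inr (Or.inr ⟨c, Or.inl (.refl _)⟩), Or.inr (Or.inr ⟨c, Or.inr (.refl _)⟩)]
  · simp at ht

theorem reducesToTwo_unit_zeros_unit {s : ℤ} (hs : s = 1 ∨ s = -1) (j : ℕ) {t : List ℤ}
    (ht : t.length ≤ 1) : ReducesToTwo (s :: (List.replicate j 0 ++ s :: t)) := by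
  refine (reducesToTwo_two_cons (x := s + s) (by omega) ht).of_teq ?_
  exact (TEq.unit_replicate_zero hs j _).trans (TEq.unit_cons hs s t)

theorem ReducesToTwo.unit_zeros_neg_cons {rest : List ℤ} (h : ReducesToTwo rest)
    (hne : rest ≠ []) {s : ℤ} (hs : s = 1 ∨ s = -1) (j : ℕ) (c : ℤ) :
    ReducesToTwo (s :: (List.replicate j 0 ++ (-s) :: c :: rest)) := by
  refine h.of_teq ((TEq.unit_replicate_zero hs j _).trans ((TEq.unit_cons hs _ _).trans ?_))
  simpa using TEq.zero_cons_cons c hne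

theorem ReducesToTwo.zero_cons_cons {rest : List ℤ} (h : ReducesToTwo rest) (hne : rest ≠ [])
    (c : ℤ) : ReducesToTwo (0 :: c :: rest) :=
  h.of_teq (TEq.zero_cons_cons c hne)

theorem step_involutive (b : Bool) : Function.Involutive (step b) := by
  intro s; cases b <;> cases s <;> rfl

theorem runWord_append_singleton (u : List ℤ) (a : ℤ) (b : Bool) (s : TState) :
    runWord (u ++ [a]) b s =
      (step (if Even u.length then b else !b))^[a.natAbs] (runWord u b s) := by
  induction u generalizing b s with
  | nil => rfl
  | cons x u ih =>
    simp only [List.cons_append, runWord, ih, List.length_cons, Nat.even_add_one]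
    by_cases h : Even u.length <;> simp [h]

theorem stateAt_succ {w : List ℤ} {i : ℕ} (hi : i < w.length) :
    stateAt w (i + 1) = (step (sylDir i))^[(w.getD i 0).natAbs] (stateAt w i) := by
  have hlen : (w.take i).length = i := List.length_take_of_le hi.le
  rw [stateAt, stateAt, List.take_add_one, List.getElem?_eq_getElem hi, Option.toList_some,
    runWord_append_singleton, hlen, List.getD_eq_getElem _ _ hi]
  congr 2
  by_cases h : Even i <;> simp_all [sylDir, Nat.even_iff]

section SIState

variable (i : ℕ)

theorem siState_ne_X : siState i ≠ .X := by
  unfold siState; split <;> simp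

theorem step_siState : step (sylDir i) (siState i) = siState i := by
  rcases Nat.mod_two_eq_zero_or_one i with h | h <;>
    simp [siState, sylDir, step, bstep, rstep, h]

theorem step_X : step (sylDir i) .X = siState (i + 1) := by
  rcases Nat.mod_two_eq_zero_or_one i with h | h <;>
    simp [siState, sylDir, step, bstep, rstep, h, Nat.add_mod]

theorem step_siState_succ : step (sylDir i) (siState (i + 1)) = .X := by
  rcases Nat.mod_two_eq_zero_or_one i with h | h <;>
    simp [siState, sylDir, step, bstep, rstep, h, Nat.add_mod]

theorem siState_succ_ne : siState (i + 1) ≠ siState i := by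
  rcases Nat.mod_two_eq_zero_or_one i with h | h <;> simp [siState, h, Nat.add_mod]

theorem eq_X_or_eq_siState_succ {s : TState} (h : s ≠ siState i) :
    s = .X ∨ s = siState (i + 1) := by
  rcases Nat.mod_two_eq_zero_or_one i with hi | hi <;> cases s <;>
    simp_all [siState, Nat.add_mod]

end SIState

def IsOddNSI (w : List ℤ) (i : ℕ) : Prop := ¬ IsSISyl w i ∧ Odd (w.getD i 0).natAbs

def IsOddSI (w : List ℤ) (i : ℕ) : Prop := IsSISyl w i ∧ Odd (w.getD i 0).natAbs

instance (w : List ℤ) : DecidablePred (IsOddNSI w) := fun _ => instDecidableAnd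

instance (w : List ℤ) : DecidablePred (IsOddSI w) := fun _ => instDecidableAnd

section States

variable {w : List ℤ} {i : ℕ}

theorem lt_length_of_natAbs_pos (h : 0 < (w.getD i 0).natAbs) : i < w.length := by
  by_contra hi
  rw [List.getD_eq_default _ _ (not_lt.mp hi)] at h
  exact h.false

theorem lt_length_of_odd (h : Odd (w.getD i 0).natAbs) : i < w.length :=
  lt_length_of_natAbs_pos h.pos

theorem IsOddNSI.lt_length (h : IsOddNSI w i) : i < w.length := lt_length_of_odd h.2

theorem IsOddSI.lt_length (h : IsOddSI w i) : i < w.length := lt_length_of_odd h.2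

theorem stateAt_succ_of_even (hi : i < w.length) (he : Even (w.getD i 0).natAbs) :
    stateAt w (i + 1) = stateAt w i := by
  rw [stateAt_succ hi, (step_involutive _).iterate_even he, id]

theorem stateAt_succ_of_odd (hi : i < w.length) (ho : Odd (w.getD i 0).natAbs) :
    stateAt w (i + 1) = step (sylDir i) (stateAt w i) := by
  rw [stateAt_succ hi, (step_involutive _).iterate_odd ho]

theorem IsSISyl.stateAt_succ (h : IsSISyl w i) (hi : i < w.length) :
    stateAt w (i + 1) = stateAt w i := by
  rw [_root_.stateAt_succ hi, h, Function.iterate_fixed (step_siState i)]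

theorem IsSISyl.not_succ (h : IsSISyl w i) (hi : i < w.length) : ¬ IsSISyl w (i + 1) := by
  rw [IsSISyl, h.stateAt_succ hi, h]
  exact (siState_succ_ne i).symm

theorem stateAt_ne_X_of_isSISyl (h : IsSISyl w i) : stateAt w i ≠ .X :=
  h ▸ siState_ne_X i

theorem stateAt_eq_siState_succ (hX : stateAt w i ≠ .X) (h : ¬ IsSISyl w i) :
    stateAt w i = siState (i + 1) :=
  (eq_X_or_eq_siState_succ i h).resolve_left hX

theorem isSISyl_succ_of_even (hi : i < w.length) (hX : stateAt w i ≠ .X) (h : ¬ IsSISyl w i)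
    (he : Even (w.getD i 0).natAbs) : IsSISyl w (i + 1) := by
  rw [IsSISyl, stateAt_succ_of_even hi he, stateAt_eq_siState_succ hX h]

theorem isSISyl_succ_of_X (hi : i < w.length) (hX : stateAt w i = .X)
    (ho : Odd (w.getD i 0).natAbs) : IsSISyl w (i + 1) := by
  rw [IsSISyl, stateAt_succ_of_odd hi ho, hX, step_X]

theorem stateAt_succ_eq_X_iff (hi : i < w.length) :
    stateAt w (i + 1) = .X ↔ (stateAt w i = .X ↔ ¬ IsOddNSI w i) := by
  by_cases hsi : IsSISyl w i
  · simp [hsi.stateAt_succ hi, IsOddNSI, hsi]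
  rcases Nat.even_or_odd (w.getD i 0).natAbs with he | ho
  · have hodd : ¬ IsOddNSI w i := fun h => Nat.not_odd_iff_even.mpr he h.2
    simp [stateAt_succ_of_even hi he, hodd]
  · have hodd : IsOddNSI w i := ⟨hsi, ho⟩
    rw [stateAt_succ_of_odd hi ho]
    rcases eq_X_or_eq_siState_succ i hsi with hX | hX <;>
      simp [hX, step_X, step_siState_succ, siState_ne_X, hodd]

theorem stateAt_eq_X_iff (hi : i ≤ w.length) :
    stateAt w i = .X ↔ Odd (Nat.count (IsOddNSI w) i) := by
  induction i with
  | zero => simp [stateAt, runWord]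
  | succ i ih =>
    rw [stateAt_succ_eq_X_iff hi, ih (by omega), Nat.count_succ]
    by_cases h : IsOddNSI w i <;> simp [h, Nat.odd_add_one]

end States

theorem even_sum_range_iff_even_count (f : ℕ → ℕ) {p : ℕ → Prop} [DecidablePred p]
    (hp : ∀ i, p i ↔ Odd (f i)) (k : ℕ) :
    Even (∑ i ∈ Finset.range k, f i) ↔ Even (Nat.count p k) := by
  induction k with
  | zero => simp
  | succ k ih =>
    rw [Finset.sum_range_succ, Nat.count_succ, Nat.even_add, ih, Nat.even_add,
      ← Nat.not_odd_iff_even (n := f k), ← hp]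
    by_cases h : p k <;> simp [h]

theorem even_nsiCrossings_iff (w : List ℤ) :
    Even (nsiCrossings w) ↔ Even (Nat.count (IsOddNSI w) w.length) :=
  even_sum_range_iff_even_count _ (fun i => by unfold IsOddNSI; split_ifs <;> simp [*]) _

theorem even_siCrossings_iff (w : List ℤ) :
    Even (siCrossings w) ↔ Even (Nat.count (IsOddSI w) w.length) :=
  even_sum_range_iff_even_count _ (fun i => by unfold IsOddSI; split_ifs <;> simp [*]) _

def partnerRank (c : ℕ) : ℕ := if Even c then c + 1 else c - 1

section PartnerRank

variable (c : ℕ)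

theorem partnerRank_partnerRank : partnerRank (partnerRank c) = c := by
  unfold partnerRank
  rcases Nat.even_or_odd' c with ⟨a, rfl | rfl⟩ <;> simp [parity_simps]

theorem partnerRank_ne : partnerRank c ≠ c := by
  unfold partnerRank
  rcases Nat.even_or_odd' c with ⟨a, rfl | rfl⟩ <;> simp [parity_simps]

theorem partnerRank_of_even {c : ℕ} (h : Even c) : partnerRank c = c + 1 := if_pos h

theorem partnerRank_lt {c K : ℕ} (hc : c < K) (hK : Even K) : partnerRank c < K := by
  unfold partnerRank
  obtain ⟨b, rfl⟩ := hK
  rcases Nat.even_or_odd' c with ⟨a, rfl | rfl⟩ <;> simp [parity_simps] <;> omega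

theorem le_partnerRank_iff {b : ℕ} (hb : Even b) : b ≤ partnerRank c ↔ b ≤ c := by
  unfold partnerRank
  obtain ⟨b, rfl⟩ := hb
  rcases Nat.even_or_odd' c with ⟨a, rfl | rfl⟩ <;> simp [parity_simps] <;> omega

end PartnerRank

section PairUp

variable (p : ℕ → Prop) [DecidablePred p]

/-- Pairs the elements of `p` in increasing order: the `2t`-th with the `(2t+1)`-th. -/
noncomputable def pairUp (i : ℕ) : ℕ := Nat.nth p (partnerRank (Nat.count p i))

variable {p} {k : ℕ} (hk : ∀ i, p i → i < k) (hK : Even (Nat.count p k)) {i : ℕ} (hi : p i)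
include hk hK hi

theorem pairUp_spec :
    p (pairUp p i) ∧ Nat.count p (pairUp p i) = partnerRank (Nat.count p i) := by
  have hcard : ∀ hf : (Set.ofPred p).Finite, partnerRank (Nat.count p i) < hf.toFinset.card :=
    fun hf => (partnerRank_lt (Nat.count_strict_mono hi (hk i hi)) hK).trans_le <| by
      rw [Nat.count_eq_card_filter_range]
      exact Finset.card_le_card fun x hx => hf.mem_toFinset.mpr (Finset.mem_filter.mp hx).2
  exact ⟨Nat.nth_mem _ hcard, Nat.count_nth hcard⟩

theorem pairUp_mem : p (pairUp p i) := (pairUp_spec hk hK hi).1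

theorem count_pairUp : Nat.count p (pairUp p i) = partnerRank (Nat.count p i) :=
  (pairUp_spec hk hK hi).2

theorem pairUp_pairUp : pairUp p (pairUp p i) = i := by
  rw [pairUp, count_pairUp hk hK hi, partnerRank_partnerRank, Nat.nth_count hi]

theorem pairUp_ne : pairUp p i ≠ i := fun h =>
  partnerRank_ne (Nat.count p i) (by rw [← count_pairUp hk hK hi, h])

theorem le_pairUp_iff {l : ℕ} (hl : Even (Nat.count p l)) : l ≤ pairUp p i ↔ l ≤ i := by
  have hle : ∀ x, p x → (l ≤ x ↔ Nat.count p l ≤ Nat.count p x) := fun x hx =>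
    ⟨fun h => Nat.count_monotone p h, fun h => not_lt.mp fun hxl =>
      (Nat.count_strict_mono hx hxl).not_ge h⟩
  rw [hle _ (pairUp_mem hk hK hi), hle _ hi, count_pairUp hk hK hi, le_partnerRank_iff _ hl]

/-- From an element of even rank, `pairUp` is the next element of `p`. -/
theorem count_eq_of_lt_of_le_pairUp (he : Even (Nat.count p i)) {j : ℕ} (hij : i < j)
    (hj : j ≤ pairUp p i) : Nat.count p j = Nat.count p i + 1 := by
  have h1 : Nat.count p (i + 1) = Nat.count p i + 1 := Nat.count_succ_eq_succ_count_iff.mpr hi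
  have h2 := count_pairUp hk hK hi
  rw [partnerRank_of_even he] at h2
  have := Nat.count_monotone p (show i + 1 ≤ j from hij)
  have := Nat.count_monotone p hj
  omega

theorem count_pairUp_succ (he : Even (Nat.count p i)) :
    Nat.count p (pairUp p i + 1) = Nat.count p i + 2 := by
  rw [Nat.count_succ_eq_succ_count_iff.mpr (pairUp_mem hk hK hi), count_pairUp hk hK hi,
    partnerRank_of_even he]

theorem lt_pairUp (he : Even (Nat.count p i)) : i < pairUp p i := by
  by_contra h
  have := Nat.count_monotone p (not_lt.mp h)
  rw [count_pairUp hk hK hi, partnerRank_of_even he] at this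
  omega

end PairUp

section Runs

variable {w : List ℤ}

theorem even_count_of_isSISyl_pred {a : ℕ} (ha : a ≤ w.length)
    (h : a = 0 ∨ IsSISyl w (a - 1)) : Even (Nat.count (IsOddNSI w) a) := by
  rw [← Nat.not_odd_iff_even, ← stateAt_eq_X_iff ha]
  cases a with
  | zero => simp [stateAt, runWord]
  | succ b =>
    have hb : IsSISyl w b := by simpa using h
    rw [hb.stateAt_succ (by omega)]
    exact stateAt_ne_X_of_isSISyl hb

theorem isSISyl_succ_of_even_count {a : ℕ} (ha : a + 1 < w.length) (hns : ¬ IsSISyl w a)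
    (hc : Even (Nat.count (IsOddNSI w) a)) (he : Even (w.getD a 0).natAbs) :
    IsSISyl w (a + 1) := by
  refine isSISyl_succ_of_even (by omega) ?_ hns he
  rw [Ne, stateAt_eq_X_iff (by omega), Nat.not_odd_iff_even]
  exact hc

section Opener

variable (hK : Even (Nat.count (IsOddNSI w) w.length)) {a : ℕ} (ha : IsOddNSI w a)
  (hc : Even (Nat.count (IsOddNSI w) a))
include hK ha hc

theorem stateAt_eq_X_of_le_pairUp {j : ℕ} (haj : a < j) (hj : j ≤ pairUp (IsOddNSI w) a) :
    stateAt w j = .X := by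
  have hk : ∀ i, IsOddNSI w i → i < w.length := fun _ h => h.lt_length
  have hp := (pairUp_mem hk hK ha).lt_length
  rw [stateAt_eq_X_iff (by omega), count_eq_of_lt_of_le_pairUp hk hK ha hc haj hj]
  exact hc.add_one

theorem not_isSISyl_and_even_of_lt_pairUp {j : ℕ} (haj : a < j)
    (hj : j < pairUp (IsOddNSI w) a) : ¬ IsSISyl w j ∧ Even (w.getD j 0).natAbs := by
  have hk : ∀ i, IsOddNSI w i → i < w.length := fun _ h => h.lt_length
  have hns : ¬ IsSISyl w j := fun h =>
    stateAt_ne_X_of_isSISyl h (stateAt_eq_X_of_le_pairUp hK ha hc haj hj.le)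
  refine ⟨hns, Nat.not_odd_iff_even.mp fun ho => ?_⟩
  have h1 := count_eq_of_lt_of_le_pairUp hk hK ha hc haj hj.le
  have h2 := count_eq_of_lt_of_le_pairUp hk hK ha hc (haj.trans (Nat.lt_succ_self j)) hj
  rw [Nat.count_succ_eq_succ_count_iff.mpr ⟨hns, ho⟩, h1] at h2
  omega

theorem isSISyl_pairUp_succ (hp : pairUp (IsOddNSI w) a + 1 < w.length) :
    IsSISyl w (pairUp (IsOddNSI w) a + 1) :=
  isSISyl_succ_of_X (by omega)
    (stateAt_eq_X_of_le_pairUp hK ha hc (lt_pairUp (fun _ h => h.lt_length) hK ha hc) le_rfl)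
    (pairUp_mem (fun _ h => h.lt_length) hK ha).2

end Opener

end Runs

theorem List.drop_eq_getD_cons {v : List ℤ} {a : ℕ} (h : a < v.length) :
    v.drop a = v.getD a 0 :: v.drop (a + 1) := by
  rw [List.drop_eq_getElem_cons h, List.getD_eq_getElem _ _ h]

theorem List.drop_eq_replicate_zero_append {v : List ℤ} {a b : ℕ} (hab : a ≤ b)
    (hb : b ≤ v.length) (h : ∀ j, a ≤ j → j < b → v.getD j 0 = 0) :
    v.drop a = List.replicate (b - a) 0 ++ v.drop b := by
  induction hd : b - a generalizing a with
  | zero =>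
    obtain rfl : a = b := by omega
    simp
  | succ d ih =>
    rw [List.drop_eq_getD_cons (by omega), h a le_rfl (by omega),
      ih (by omega) (fun j hj hjb => h j (by omega) hjb) (by omega), List.replicate_succ,
      List.cons_append]

section LastRun

variable {w : List ℤ} {l r : ℕ}

theorem IsLastNSIRun.lt_length (h : IsLastNSIRun w l r) : l < w.length :=
  h.1.1.trans_le h.1.2.1

theorem IsLastNSIRun.not_isSISyl (h : IsLastNSIRun w l r) : ¬ IsSISyl w l :=
  h.1.2.2.1 l le_rfl h.1.1

theorem IsLastNSIRun.even_count (h : IsLastNSIRun w l r) : Even (Nat.count (IsOddNSI w) l) :=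
  even_count_of_isSISyl_pred h.lt_length.le h.1.2.2.2.1

/-- The syllable after an SI syllable is NSI, and all syllables after the last run are SI. -/
theorem IsLastNSIRun.length_le_of_isSISyl (h : IsLastNSIRun w l r) {c : ℕ} (hlc : l ≤ c)
    (hc : IsSISyl w c) : w.length ≤ c + 1 := by
  by_contra hck
  have hrc : r ≤ c := not_lt.mp fun hcr => h.1.2.2.1 c hlc hcr hc
  exact hc.not_succ (by omega) (h.2 (c + 1) (by omega) (by omega))

theorem IsLastNSIRun.eq_succ_of_even (h : IsLastNSIRun w l r)
    (he : Even (w.getD l 0).natAbs) : r = l + 1 := by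
  by_contra hr
  have hlr : l + 1 < r := by have := h.1.1; omega
  exact h.1.2.2.1 (l + 1) (by omega) hlr <|
    isSISyl_succ_of_even_count (by have := h.1.2.1; omega) h.not_isSISyl h.even_count he

theorem IsLastNSIRun.two_le_of_even (h : IsLastNSIRun w l r)
    (hpos : 0 < ∑ j ∈ Finset.Ico l r, (w.getD j 0).natAbs) (he : Even (w.getD l 0).natAbs) :
    2 ≤ (w.getD l 0).natAbs := by
  rw [h.eq_succ_of_even he, Nat.Ico_succ_singleton, Finset.sum_singleton] at hpos
  obtain ⟨a, ha⟩ := he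
  omega

end LastRun

/-- The constraints that the pairing strategy puts on the resulting word `v` when the last NSI
run of `w` starts at `l`. -/
structure IsPairedResolution (w : List ℤ) (l : ℕ) (v : List ℤ) : Prop where
  length_eq : v.length = w.length
  eq_zero : ∀ i < w.length, i ≠ l → ¬ IsSISyl w i → Even (w.getD i 0).natAbs →
    v.getD i 0 = 0
  eq_two : Even (w.getD l 0).natAbs → v.getD l 0 = 2 ∨ v.getD l 0 = -2
  unit : ∀ i, IsOddNSI w i → v.getD i 0 = 1 ∨ v.getD i 0 = -1
  partner : ∀ i, IsOddNSI w i →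
    v.getD (pairUp (IsOddNSI w) i) 0 = (if l ≤ i then 1 else -1) * v.getD i 0

namespace IsPairedResolution

variable {w v : List ℤ} {l r : ℕ} (hv : IsPairedResolution w l v)
  (hK : Even (Nat.count (IsOddNSI w) w.length))
include hv hK

theorem drop_eq_of_isOddNSI {a : ℕ} (ha : IsOddNSI w a) (hc : Even (Nat.count (IsOddNSI w) a))
    (hl : ∀ j, a < j → j < pairUp (IsOddNSI w) a → j ≠ l) :
    v.drop a = v.getD a 0 :: (List.replicate (pairUp (IsOddNSI w) a - (a + 1)) 0 ++
      v.getD (pairUp (IsOddNSI w) a) 0 :: v.drop (pairUp (IsOddNSI w) a + 1)) := by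
  have hk : ∀ i, IsOddNSI w i → i < w.length := fun _ h => h.lt_length
  have hap := lt_pairUp hk hK ha hc
  have hp := hv.length_eq ▸ hk _ (pairUp_mem hk hK ha)
  have hvl := hv.length_eq
  rw [List.drop_eq_getD_cons (by omega), List.drop_eq_replicate_zero_append hap hp.le,
    List.drop_eq_getD_cons hp]
  intro j haj hjp
  have hj := not_isSISyl_and_even_of_lt_pairUp hK ha hc haj hjp
  exact hv.eq_zero j (by omega) (hl j haj hjp) hj.1 hj.2

theorem reducesToTwo_drop_last (hrun : IsLastNSIRun w l r) : ReducesToTwo (v.drop l) := by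
  have hl := hrun.lt_length
  by_cases he : Even (w.getD l 0).natAbs
  · rw [List.drop_eq_getD_cons (by rw [hv.length_eq]; exact hl)]
    refine reducesToTwo_two_cons (hv.eq_two he) ?_
    rw [List.length_drop, hv.length_eq]
    by_cases h1 : l + 1 < w.length
    · have := hrun.length_le_of_isSISyl (by omega)
        (isSISyl_succ_of_even_count h1 hrun.not_isSISyl hrun.even_count he)
      omega
    · omega
  · have ha : IsOddNSI w l := ⟨hrun.not_isSISyl, Nat.not_even_iff_odd.mp he⟩
    have hp := (pairUp_mem (fun _ h => h.lt_length) hK ha).lt_length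
    rw [hv.drop_eq_of_isOddNSI hK ha hrun.even_count (fun j hj _ => by omega), hv.partner l ha,
      if_pos le_rfl, one_mul]
    refine reducesToTwo_unit_zeros_unit (hv.unit l ha) _ ?_
    rw [List.length_drop, hv.length_eq]
    by_cases h1 : pairUp (IsOddNSI w) l + 1 < w.length
    · have hlp := lt_pairUp (fun _ h => h.lt_length) hK ha hrun.even_count
      have := hrun.length_le_of_isSISyl (by omega)
        (isSISyl_pairUp_succ hK ha hrun.even_count h1)
      omega
    · omega

theorem reducesToTwo_drop (hrun : IsLastNSIRun w l r) {a : ℕ} (hal : a ≤ l)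
    (hns : ¬ IsSISyl w a) (hc : Even (Nat.count (IsOddNSI w) a)) : ReducesToTwo (v.drop a) := by
  rcases hal.eq_or_lt with rfl | hal
  · exact hv.reducesToTwo_drop_last hK hrun
  have hl := hrun.lt_length
  have hvl := hv.length_eq
  by_cases he : Even (w.getD a 0).natAbs
  · have hsi := isSISyl_succ_of_even_count (by omega) hns hc he
    have hal1 : a + 1 < l := lt_of_le_of_ne hal fun h => hrun.not_isSISyl (h ▸ hsi)
    have hc2 : Nat.count (IsOddNSI w) (a + 2) = Nat.count (IsOddNSI w) a := by
      rw [Nat.count_succ_eq_count_iff.mpr fun h => h.1 hsi,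
        Nat.count_succ_eq_count_iff.mpr fun h => Nat.not_even_iff_odd.mpr h.2 he]
    have ih := reducesToTwo_drop hrun (a := a + 2) (by omega) (hsi.not_succ (by omega))
      (hc2 ▸ hc)
    rw [List.drop_eq_getD_cons (by omega), hv.eq_zero a (by omega) hal.ne hns he,
      List.drop_eq_getD_cons (by omega)]
    exact ih.zero_cons_cons (by simp; omega) _
  · have ha : IsOddNSI w a := ⟨hns, Nat.not_even_iff_odd.mp he⟩
    have hk : ∀ i, IsOddNSI w i → i < w.length := fun _ h => h.lt_length
    set p := pairUp (IsOddNSI w) a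
    have hap : a < p := lt_pairUp hk hK ha hc
    have hpl : p < l := not_le.mp fun hlp => by
      have hX := stateAt_eq_X_of_le_pairUp hK ha hc hal hlp
      rw [stateAt_eq_X_iff hl.le, ← Nat.not_even_iff_odd] at hX
      exact hX hrun.even_count
    have hsi := isSISyl_pairUp_succ hK ha hc (by omega)
    have hpl1 : p + 1 < l := lt_of_le_of_ne hpl fun h => hrun.not_isSISyl (h ▸ hsi)
    have hc2 : Nat.count (IsOddNSI w) (p + 2) = Nat.count (IsOddNSI w) a + 2 := by
      rw [Nat.count_succ_eq_count_iff.mpr fun h => h.1 hsi, count_pairUp_succ hk hK ha hc]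
    have ih := reducesToTwo_drop hrun (a := p + 2) (by omega) (hsi.not_succ (by omega))
      (by rw [hc2]; exact hc.add (by norm_num))
    rw [hv.drop_eq_of_isOddNSI hK ha hc (fun j _ hj => by omega), hv.partner a ha,
      if_neg (by omega), neg_one_mul, List.drop_eq_getD_cons (by omega)]
    exact ih.unit_zeros_neg_cons (by simp; omega) (hv.unit a ha) _ _
termination_by l - a

theorem reducesToTwo (hrun : IsLastNSIRun w l r) : ReducesToTwo v := by
  simpa using hv.reducesToTwo_drop hK hrun (Nat.zero_le l)
    (by simp [IsSISyl, stateAt, runWord, siState]) (by simp)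

end IsPairedResolution

section CrossPartner

variable (m : ℕ → ℕ) (P : ℕ → ℕ)

/-- Crossings are positions `(i, j)` with `j < m i`. Within a syllable the crossings `2t` and
`2t + 1` are partners; the last crossing of an odd syllable `i` is the partner of the last
crossing of the syllable `P i`. -/
def crossPartner (y : ℕ × ℕ) : ℕ × ℕ :=
  if y.2 % 2 = 1 then (y.1, y.2 - 1)
  else if y.2 + 1 < m y.1 then (y.1, y.2 + 1)
  else (P y.1, m (P y.1) - 1)

variable {m P}

theorem crossPartner_two_mul {i t : ℕ} (ht : 2 * t + 1 < m i) :
    crossPartner m P (i, 2 * t) = (i, 2 * t + 1) := by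
  simp only [crossPartner]
  rw [if_neg (by omega), if_pos ht]

theorem crossPartner_last {i : ℕ} (ho : Odd (m i)) :
    crossPartner m P (i, m i - 1) = (P i, m (P i) - 1) := by
  obtain ⟨a, ha⟩ := ho
  simp only [crossPartner]
  rw [if_neg (by omega), if_neg (by omega)]

theorem crossPartner_spec (hP : ∀ i, Odd (m i) → Odd (m (P i)) ∧ P (P i) = i ∧ P i ≠ i)
    {y : ℕ × ℕ} (hy : y.2 < m y.1) :
    (crossPartner m P y).2 < m (crossPartner m P y).1 ∧
      crossPartner m P (crossPartner m P y) = y ∧ crossPartner m P y ≠ y := by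
  obtain ⟨i, j⟩ := y
  dsimp only at hy
  by_cases hj : j % 2 = 1
  · simp [crossPartner, hj, show (j - 1) % 2 = 0 by omega, show j - 1 + 1 = j by omega]
    omega
  by_cases hjm : j + 1 < m i
  · simp [crossPartner, hj, hjm, show (j + 1) % 2 = 1 by omega]
  have ho : Odd (m i) := ⟨j / 2, by omega⟩
  obtain ⟨hPo, hPP, hne⟩ := hP i ho
  obtain rfl : j = m i - 1 := by omega
  rw [crossPartner_last ho, crossPartner_last hPo, hPP]
  exact ⟨Nat.sub_lt hPo.pos one_pos, rfl, fun h => hne (congrArg Prod.fst h)⟩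

end CrossPartner

section OddPartner

variable (w : List ℤ)

noncomputable def oddPartner (i : ℕ) : ℕ :=
  if IsSISyl w i then pairUp (IsOddSI w) i else pairUp (IsOddNSI w) i

variable {w}

theorem le_oddPartner_iff (hNSI : Even (Nat.count (IsOddNSI w) w.length)) {l i : ℕ}
    (hl : Even (Nat.count (IsOddNSI w) l)) (hi : IsOddNSI w i) :
    l ≤ oddPartner w i ↔ l ≤ i := by
  rw [oddPartner, if_neg hi.1]
  exact le_pairUp_iff (fun _ h => h.lt_length) hNSI hi hl

theorem oddPartner_spec (hSI : Even (Nat.count (IsOddSI w) w.length))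
    (hNSI : Even (Nat.count (IsOddNSI w) w.length)) {i : ℕ} (ho : Odd (w.getD i 0).natAbs) :
    (Odd (w.getD (oddPartner w i) 0).natAbs ∧ oddPartner w (oddPartner w i) = i ∧
      oddPartner w i ≠ i) ∧ (IsSISyl w (oddPartner w i) ↔ IsSISyl w i) := by
  by_cases hs : IsSISyl w i
  · have hi : IsOddSI w i := ⟨hs, ho⟩
    have hk : ∀ j, IsOddSI w j → j < w.length := fun _ h => h.lt_length
    have hm := pairUp_mem hk hSI hi
    simp only [oddPartner, if_pos hs, if_pos hm.1, pairUp_pairUp hk hSI hi]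
    exact ⟨⟨hm.2, trivial, pairUp_ne hk hSI hi⟩, iff_of_true hm.1 hs⟩
  · have hi : IsOddNSI w i := ⟨hs, ho⟩
    have hk : ∀ j, IsOddNSI w j → j < w.length := fun _ h => h.lt_length
    have hm := pairUp_mem hk hNSI hi
    simp only [oddPartner, if_neg hs, if_neg hm.1, pairUp_pairUp hk hNSI hi]
    exact ⟨⟨hm.2, trivial, pairUp_ne hk hNSI hi⟩, iff_of_false hm.1 hs⟩

end OddPartner

/-- The partner of a crossing gets the same sign exactly for the last crossings of odd NSI
syllables from the last run on, and for the first two crossings of the last run when it is a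
single even syllable. -/
def pairSign (w : List ℤ) (l : ℕ) (y : ℕ × ℕ) : ℤˣ :=
  if (¬ IsSISyl w y.1 ∧ Odd (w.getD y.1 0).natAbs ∧ y.2 + 1 = (w.getD y.1 0).natAbs ∧
      l ≤ y.1) ∨ (y.1 = l ∧ Even (w.getD l 0).natAbs ∧ y.2 < 2) then 1 else -1

section PairSign

variable {w : List ℤ} {l : ℕ}

theorem pairSign_two_mul {i t : ℕ} (ht : 2 * t + 1 < (w.getD i 0).natAbs) :
    pairSign w l (i, 2 * t) = if i = l ∧ Even (w.getD l 0).natAbs ∧ t = 0 then 1 else -1 := by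
  unfold pairSign
  congr 1
  apply propext
  constructor
  · rintro (⟨-, -, h, -⟩ | ⟨h1, h2, h3⟩)
    · dsimp only at h; omega
    · exact ⟨h1, h2, by dsimp only at h3; omega⟩
  · rintro ⟨h1, h2, rfl⟩
    exact Or.inr ⟨h1, h2, by norm_num⟩

theorem pairSign_last {i : ℕ} (ho : Odd (w.getD i 0).natAbs) :
    pairSign w l (i, (w.getD i 0).natAbs - 1) = if ¬ IsSISyl w i ∧ l ≤ i then 1 else -1 := by
  have hfirst : ¬ (i = l ∧ Even (w.getD l 0).natAbs ∧ (w.getD i 0).natAbs - 1 < 2) :=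
    fun h => Nat.not_even_iff_odd.mpr ho (h.1 ▸ h.2.1)
  simp only [pairSign, hfirst, or_false, ho, Nat.sub_add_cancel ho.pos, true_and]

theorem pairSign_crossPartner (hSI : Even (Nat.count (IsOddSI w) w.length))
    (hNSI : Even (Nat.count (IsOddNSI w) w.length)) (hl : Even (Nat.count (IsOddNSI w) l))
    {y : ℕ × ℕ} (hy : y.2 < (w.getD y.1 0).natAbs) :
    pairSign w l (crossPartner (fun i => (w.getD i 0).natAbs) (oddPartner w) y) =
      pairSign w l y := by
  obtain ⟨i, j⟩ := y
  dsimp only at hy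
  by_cases hj : j % 2 = 1
  · simp only [crossPartner, hj, if_true, pairSign, Nat.odd_iff, Nat.even_iff]
    split_ifs <;> first | rfl | omega
  by_cases hjm : j + 1 < (w.getD i 0).natAbs
  · simp only [crossPartner, hj, hjm, if_true, if_false, pairSign, Nat.odd_iff, Nat.even_iff]
    split_ifs <;> first | rfl | omega
  have ho : Odd (w.getD i 0).natAbs := ⟨j / 2, by omega⟩
  obtain ⟨⟨hPo, -, -⟩, hPs⟩ := oddPartner_spec hSI hNSI ho
  obtain rfl : j = (w.getD i 0).natAbs - 1 := by omega
  rw [crossPartner_last (m := fun i => (w.getD i 0).natAbs) ho, pairSign_last hPo,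
    pairSign_last ho]
  by_cases hs : IsSISyl w i
  · simp [hs, hPs]
  · simp [hs, hPs, le_oddPartner_iff hNSI hl ⟨hs, ho⟩]

end PairSign

theorem sum_range_eq_of_pairs_neg {h : ℕ → ℤ} {m : ℕ}
    (hpair : ∀ t, 2 * t + 1 < m → h (2 * t + 1) = -h (2 * t)) :
    ∑ j ∈ Finset.range m, h j = if Even m then 0 else h (m - 1) := by
  have heven : ∀ c, 2 * c ≤ m → ∑ j ∈ Finset.range (2 * c), h j = 0 := by
    intro c
    induction c with
    | zero => simp
    | succ c ih =>
      intro hc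
      rw [show 2 * (c + 1) = 2 * c + 1 + 1 by ring, Finset.sum_range_succ,
        Finset.sum_range_succ, ih (by omega), hpair c (by omega)]
      ring
  obtain ⟨c, rfl | rfl⟩ := Nat.even_or_odd' m
  · simp [heven c le_rfl]
  · rw [Finset.sum_range_succ, heven c (by omega)]
    simp [parity_simps]

section Signs

variable {w : List ℤ} {l : ℕ} {G : ℕ × ℕ → ℤ}
  (hG : ∀ y : ℕ × ℕ, y.2 < (w.getD y.1 0).natAbs →
    G (crossPartner (fun i => (w.getD i 0).natAbs) (oddPartner w) y) = pairSign w l y * G y)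
include hG

theorem signs_two_mul_succ {i t : ℕ} (ht : 2 * t + 1 < (w.getD i 0).natAbs) :
    G (i, 2 * t + 1) =
      (if i = l ∧ Even (w.getD l 0).natAbs ∧ t = 0 then 1 else -1) * G (i, 2 * t) := by
  have := hG (i, 2 * t) (by dsimp only; omega)
  rw [crossPartner_two_mul ht, pairSign_two_mul ht] at this
  rw [this]
  split_ifs <;> simp

theorem sum_signs_of_not_last_even {i : ℕ} (hi : ¬ (i = l ∧ Even (w.getD l 0).natAbs)) :
    ∑ j ∈ Finset.range (w.getD i 0).natAbs, G (i, j) =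
      if Even (w.getD i 0).natAbs then 0 else G (i, (w.getD i 0).natAbs - 1) :=
  sum_range_eq_of_pairs_neg fun _ ht => by
    rw [signs_two_mul_succ hG ht, if_neg fun h => hi ⟨h.1, h.2.1⟩, neg_one_mul]

theorem sum_signs_last_even (he : Even (w.getD l 0).natAbs) (h2 : 2 ≤ (w.getD l 0).natAbs) :
    ∑ j ∈ Finset.range (w.getD l 0).natAbs, G (l, j) = 2 * G (l, 0) := by
  obtain ⟨c, hc⟩ : ∃ c, (w.getD l 0).natAbs = 2 + c := ⟨_, (Nat.add_sub_cancel' h2).symm⟩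
  have h01 : G (l, 1) = G (l, 0) := by
    have := signs_two_mul_succ hG (i := l) (t := 0) (by omega)
    rwa [if_pos ⟨rfl, he, rfl⟩, one_mul] at this
  have hrest := sum_range_eq_of_pairs_neg (h := fun j => G (l, 2 + j)) (m := c) fun t ht => by
    have := signs_two_mul_succ hG (i := l) (t := t + 1) (by omega)
    rw [if_neg (by omega), neg_one_mul] at this
    rwa [show 2 + (2 * t + 1) = 2 * (t + 1) + 1 by ring, show 2 + 2 * t = 2 * (t + 1) by ring]
  have hce : Even c := by rw [hc] at he; simpa [parity_simps] using he
  rw [hc, Finset.sum_range_add, hrest, if_pos hce, Finset.sum_range_succ, Finset.sum_range_one,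
    h01]
  ring

theorem isPairedResolution_of_signs (hSI : Even (Nat.count (IsOddSI w) w.length))
    (hNSI : Even (Nat.count (IsOddNSI w) w.length))
    (hl2 : Even (w.getD l 0).natAbs → 2 ≤ (w.getD l 0).natAbs)
    (hG1 : ∀ y : ℕ × ℕ, y.2 < (w.getD y.1 0).natAbs → G y = 1 ∨ G y = -1) {v : List ℤ}
    (hvlen : v.length = w.length)
    (hv : ∀ i < w.length, v.getD i 0 = ∑ j ∈ Finset.range (w.getD i 0).natAbs, G (i, j)) :
    IsPairedResolution w l v := by
  have hodd : ∀ i, Odd (w.getD i 0).natAbs →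
      v.getD i 0 = G (i, (w.getD i 0).natAbs - 1) := fun i ho => by
    rw [hv i (lt_length_of_odd ho), sum_signs_of_not_last_even hG (i := i)
      (fun h => Nat.not_even_iff_odd.mpr ho (h.1 ▸ h.2)), if_neg (Nat.not_even_iff_odd.mpr ho)]
  refine ⟨hvlen, fun i hi hil _ he => ?_, fun he => ?_, fun i hi => ?_, fun i hi => ?_⟩
  · rw [hv i hi, sum_signs_of_not_last_even hG (fun h => hil h.1), if_pos he]
  · have h2 := hl2 he
    rw [hv l (lt_length_of_natAbs_pos (by omega)), sum_signs_last_even hG he h2]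
    rcases hG1 (l, 0) (by dsimp only; omega) with h | h <;> simp [h]
  · rw [hodd i hi.2]
    exact hG1 _ (by dsimp only; have := hi.2.pos; omega)
  · obtain ⟨⟨hPo, -, -⟩, -⟩ := oddPartner_spec hSI hNSI hi.2
    have := hG (i, (w.getD i 0).natAbs - 1) (by dsimp only; have := hi.2.pos; omega)
    rw [crossPartner_last (m := fun i => (w.getD i 0).natAbs) hi.2, pairSign_last hi.2] at this
    rw [← show oddPartner w i = pairUp (IsOddNSI w) i from if_neg hi.1, hodd _ hPo, hodd i hi.2,
      this]
    by_cases h : l ≤ i <;> simp [h, hi.1]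

end Signs

section PairingStrategy

variable {C : Type*}

theorem mem_of_nodup_of_length_eq [Fintype C] {l : List C} (hl : l.Nodup)
    (hlen : l.length = Fintype.card C) (x : C) : x ∈ l := by
  classical
  rw [← List.mem_toFinset, Finset.eq_univ_of_card _ ((List.toFinset_card_of_nodup hl).trans hlen)]
  exact Finset.mem_univ x

def IsPaired (f : C → C) (ε : C → ℤˣ) (p : List (C × ℤ)) : Prop :=
  ∀ m ∈ p, (f m.1, (ε m.1 : ℤ) * m.2) ∈ p

variable {f : C → C} {ε : C → ℤˣ}

theorem IsPaired.partner_not_mem (hf : Function.Involutive f) {q : List (C × ℤ)}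
    (hq : IsPaired f ε q) {x : C} (hx : x ∉ q.map Prod.fst) : f x ∉ q.map Prod.fst := by
  intro hfx
  obtain ⟨m, hm, hmx⟩ := List.mem_map.mp hfx
  exact hx (List.mem_map.mpr ⟨_, hq m hm, by rw [hmx, hf]⟩)

theorem IsPaired.append_pair (hf : Function.Involutive f) (hε : ∀ x, ε (f x) = ε x)
    {q : List (C × ℤ)} (hq : IsPaired f ε q) (m : C × ℤ) :
    IsPaired f ε (q ++ [m, (f m.1, (ε m.1 : ℤ) * m.2)]) := by
  intro m' hm'
  simp only [List.mem_append, List.mem_cons, List.not_mem_nil, or_false] at hm' ⊢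
  rcases hm' with hm' | rfl | rfl
  · exact Or.inl (hq m' hm')
  · exact Or.inr (Or.inr rfl)
  · refine Or.inr (Or.inl ?_)
    rw [hf, hε, ← mul_assoc, ← Units.val_mul, Int.units_mul_self, Units.val_one, one_mul]

theorem IsPaired.exists_sign [Fintype C] {p : List (C × ℤ)} (hpaired : IsPaired f ε p)
    (hp : LegalPlay p) (hlen : p.length = Fintype.card C) :
    ∃ g : C → ℤ, (∀ m ∈ p, m.2 = g m.1) ∧ (∀ x, g x = 1 ∨ g x = -1) ∧
      ∀ x, g (f x) = ε x * g x := by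
  classical
  have hall := mem_of_nodup_of_length_eq hp.1 (by simpa using hlen)
  let g : C → ℤ := fun x => if h : ∃ m ∈ p, m.1 = x then h.choose.2 else 0
  have hg : ∀ m ∈ p, m.2 = g m.1 := fun m hm => by
    have h : ∃ m' ∈ p, m'.1 = m.1 := ⟨m, hm, rfl⟩
    simp only [g, dif_pos h, List.inj_on_of_nodup_map hp.1 h.choose_spec.1 hm h.choose_spec.2]
  refine ⟨g, hg, fun x => ?_, fun x => ?_⟩ <;> obtain ⟨m, hm, rfl⟩ := List.mem_map.mp (hall x)
  · exact hg m hm ▸ hp.2 m hm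
  · rw [← hg m hm, ← hg _ (hpaired m hm)]

open Classical in
noncomputable def freshMove [Nonempty C] (p : List (C × ℤ)) : C × ℤ :=
  (if h : ∃ x, x ∉ p.map Prod.fst then h.choose else Classical.arbitrary C, 1)

open Classical in
noncomputable def pairingStrategy [Nonempty C] (f : C → C) (ε : C → ℤˣ) (p : List (C × ℤ)) :
    C × ℤ :=
  match p.getLast? with
  | some m => if f m.1 ∈ p.map Prod.fst then freshMove p else (f m.1, (ε m.1 : ℤ) * m.2)
  | none => freshMove p

variable [Nonempty C]

theorem pairingStrategy_append (hf : Function.Involutive f) (hfix : ∀ x, f x ≠ x)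
    {q : List (C × ℤ)} (hq : IsPaired f ε q) {m : C × ℤ} (hm : m.1 ∉ q.map Prod.fst) :
    pairingStrategy f ε (q ++ [m]) = (f m.1, (ε m.1 : ℤ) * m.2) := by
  have hnot : f m.1 ∉ (q ++ [m]).map Prod.fst := by
    simpa [hfix m.1] using hq.partner_not_mem hf hm
  rw [pairingStrategy, List.getLast?_concat]
  exact if_neg hnot

theorem isPaired_take_of_follows (hf : Function.Involutive f) (hfix : ∀ x, f x ≠ x)
    (hε : ∀ x, ε (f x) = ε x) {p : List (C × ℤ)} (hp : LegalPlay p)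
    (hfol : Follows 1 (pairingStrategy f ε) p) :
    ∀ t, 2 * t ≤ p.length → IsPaired f ε (p.take (2 * t))
  | 0, _ => by simp [IsPaired]
  | t + 1, ht => by
    have ih := isPaired_take_of_follows hf hfix hε hp hfol t (by omega)
    have h1 : 2 * t + 1 < p.length := by omega
    have hq : p.take (2 * t + 1) = p.take (2 * t) ++ [p[2 * t]] :=
      (List.take_append_getElem (by omega)).symm
    have hnd : ((p.take (2 * t + 1)).map Prod.fst).Nodup :=
      hp.1.sublist ((List.take_sublist _ _).map _)
    have hm : p[2 * t].1 ∉ (p.take (2 * t)).map Prod.fst := by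
      rw [hq, List.map_append, List.map_singleton] at hnd
      exact (List.nodup_append_comm.mp hnd).notMem
    have hresp : p[2 * t + 1] = (f p[2 * t].1, (ε p[2 * t].1 : ℤ) * p[2 * t].2) := by
      have := hfol (2 * t + 1) h1 (by omega)
      rwa [List.get_eq_getElem, hq, pairingStrategy_append hf hfix ih hm] at this
    rw [show 2 * (t + 1) = 2 * t + 1 + 1 by ring, ← List.take_append_getElem h1, hq, hresp,
      List.append_assoc, List.singleton_append]
    exact ih.append_pair hf hε _

variable [Fintype C]

theorem freshMove_legal {p : List (C × ℤ)} (hp : p.length < Fintype.card C) :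
    (freshMove p).1 ∉ p.map Prod.fst ∧ ((freshMove p).2 = 1 ∨ (freshMove p).2 = -1) := by
  have h : ∃ x, x ∉ p.map Prod.fst := Cardinal.exists_notMem_of_length_lt _ (by simpa using hp)
  rw [freshMove, dif_pos h]
  exact ⟨h.choose_spec, Or.inl rfl⟩

theorem pairingStrategy_legal : LegalStrat 1 (pairingStrategy f ε) := by
  intro p hp _ hlen
  unfold pairingStrategy
  split
  · next m hm =>
    split_ifs with h
    · exact freshMove_legal hlen
    · exact ⟨h, Int.isUnit_iff.mp
        ((ε m.1).isUnit.mul (Int.isUnit_iff.mpr (hp.2 m (List.mem_of_getLast? hm))))⟩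
  · exact freshMove_legal hlen

theorem canForce_isPaired (hf : Function.Involutive f) (hfix : ∀ x, f x ≠ x)
    (hε : ∀ x, ε (f x) = ε x) : CanForce 1 (IsPaired f ε) := by
  refine ⟨pairingStrategy f ε, pairingStrategy_legal, fun p hp hlen hfol => ?_⟩
  have key := isPaired_take_of_follows hf hfix hε hp hfol
  obtain ⟨t, ht | ht⟩ := Nat.even_or_odd' p.length
  · simpa [← ht] using key t ht.ge
  · -- the last move, made by the first player, would have its partner among the earlier ones
    exfalso
    have hlast : p = p.take (2 * t) ++ [p[2 * t]] := by
      rw [List.take_append_getElem (by omega), ← ht, List.take_length]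
    have hsplit := congrArg (List.map Prod.fst) hlast
    rw [List.map_append, List.map_singleton] at hsplit
    have hm : p[2 * t].1 ∉ (p.take (2 * t)).map Prod.fst :=
      (List.nodup_append_comm.mp (hsplit ▸ hp.1)).notMem
    have hall := mem_of_nodup_of_length_eq hp.1 (by simpa using hlen) (f p[2 * t].1)
    rw [hsplit, List.mem_append, List.mem_singleton] at hall
    exact hall.elim ((key t (by omega)).partner_not_mem hf hm) (hfix _)

end PairingStrategy

theorem CanForce.mono {C : Type*} [Fintype C] {parity : ℕ} {P Q : List (C × ℤ) → Prop}
    (h : CanForce parity P) (hPQ : ∀ p, LegalPlay p → p.length = Fintype.card C → P p → Q p) :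
    CanForce parity Q :=
  let ⟨σ, hσ, hP⟩ := h
  ⟨σ, hσ, fun p hp hlen hfol => hPQ p hp hlen (hP p hp hlen hfol)⟩

theorem natAbs_getD_natWord (n : List ℕ) (i : ℕ) :
    ((natWord n).getD i 0).natAbs = n.getD i 0 := by
  induction n generalizing i with
  | nil => simp [natWord]
  | cons a t ih => cases i <;> simp_all [natWord]

namespace Cr

variable {n : List ℕ}

def pos (x : Cr n) : ℕ × ℕ := (x.1, x.2)

theorem pos_lt (x : Cr n) : x.pos.2 < n.getD x.pos.1 0 := by
  simp [pos]

theorem pos_injective : Function.Injective (pos : Cr n → ℕ × ℕ) := by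
  rintro ⟨⟨i, hi⟩, ⟨j, hj⟩⟩ ⟨⟨i', hi'⟩, ⟨j', hj'⟩⟩ h
  obtain ⟨rfl, rfl⟩ := Prod.mk.inj h
  rfl

def ofPos (y : ℕ × ℕ) (h : y.2 < n.getD y.1 0) : Cr n :=
  have hy : y.1 < n.length := by
    by_contra hy
    rw [List.getD_eq_default _ _ (not_lt.mp hy)] at h
    exact Nat.not_lt_zero _ h
  ⟨⟨y.1, hy⟩, ⟨y.2, by rwa [List.getD_eq_getElem _ _ hy] at h⟩⟩

theorem pos_ofPos (y : ℕ × ℕ) (h : y.2 < n.getD y.1 0) : (ofPos y h).pos = y := rfl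

theorem ofPos_pos (x : Cr n) : ofPos x.pos x.pos_lt = x := rfl

/-- `φ` acting on crossings through their positions; the identity where `φ` leaves the
crossings. -/
noncomputable def lift (φ : ℕ × ℕ → ℕ × ℕ) (x : Cr n) : Cr n :=
  if h : (φ x.pos).2 < n.getD (φ x.pos).1 0 then ofPos _ h else x

theorem lift_spec {φ : ℕ × ℕ → ℕ × ℕ}
    (hφ : ∀ y : ℕ × ℕ, y.2 < n.getD y.1 0 → (φ y).2 < n.getD (φ y).1 0 ∧ φ (φ y) = y ∧ φ y ≠ y)
    (x : Cr n) : (lift φ x).pos = φ x.pos ∧ lift φ (lift φ x) = x ∧ lift φ x ≠ x := by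
  have hpos : ∀ x : Cr n, (lift φ x).pos = φ x.pos := fun x => by
    rw [lift, dif_pos (hφ _ x.pos_lt).1, pos_ofPos]
  obtain ⟨-, hφφ, hne⟩ := hφ _ x.pos_lt
  refine ⟨hpos x, pos_injective ?_, fun h => hne ?_⟩
  · rw [hpos, hpos, hφφ]
  · rw [← hpos, h]

noncomputable def extend (g : Cr n → ℤ) (y : ℕ × ℕ) : ℤ :=
  if h : y.2 < n.getD y.1 0 then g (ofPos y h) else 0

theorem extend_pos (g : Cr n → ℤ) (x : Cr n) : extend g x.pos = g x := by
  rw [extend, dif_pos x.pos_lt, ofPos_pos]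

end Cr

def signWord (n : List ℕ) (g : Cr n → ℤ) : List ℤ :=
  (List.finRange n.length).map fun i => ∑ j, g ⟨i, j⟩

theorem result_eq_signWord {n : List ℕ} {p : List (Cr n × ℤ)} (hp : LegalPlay p)
    (hlen : p.length = Fintype.card (Cr n)) {g : Cr n → ℤ} (hg : ∀ m ∈ p, m.2 = g m.1) :
    result n p = signWord n g := by
  classical
  have hall := mem_of_nodup_of_length_eq hp.1 (by simpa using hlen)
  refine List.map_congr_left fun i _ => ?_
  have hfilter : ((p.map Prod.fst).filter fun x => decide (x.1 = i)).toFinset =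
      Finset.univ.filter fun x : Cr n => x.1 = i := by
    ext x
    simp [hall x]
  calc ((p.filter fun m => decide (m.1.1 = i)).map Prod.snd).sum
      = (((p.map Prod.fst).filter fun x => decide (x.1 = i)).map g).sum := by
        rw [List.filter_map, List.map_map]
        exact congrArg List.sum (List.map_congr_left fun m hm => hg m (List.mem_of_mem_filter hm))
    _ = ∑ x ∈ Finset.univ.filter (fun x : Cr n => x.1 = i), g x := by
        rw [← hfilter, List.sum_toFinset _ (hp.1.filter _)]
    _ = ∑ j, g ⟨i, j⟩ := by
        rw [Finset.sum_filter, Fintype.sum_sigma, Finset.sum_eq_single i]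
        · simp
        · intro b _ hb
          simp [hb]
        · simp

theorem signWord_getD {n : List ℕ} (g : Cr n → ℤ) {i : ℕ} (hi : i < n.length) :
    (signWord n g).getD i 0 = ∑ j ∈ Finset.range (n.getD i 0), Cr.extend g (i, j) := by
  rw [List.getD_eq_getElem _ _ (by simpa [signWord] using hi), List.getD_eq_getElem _ _ hi]
  simp only [signWord, List.getElem_map]
  rw [← Fin.sum_univ_eq_sum_range]
  generalize hk : (List.finRange n.length)[i]'(by simpa using hi) = k
  obtain rfl : k = ⟨i, hi⟩ := by rw [← hk, List.getElem_finRange]; rfl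
  exact Fintype.sum_congr _ _ fun j => (Cr.extend_pos g ⟨⟨i, hi⟩, j⟩).symm

section CrossingPairing

variable (n : List ℕ)

noncomputable def crossingPairing : Cr n → Cr n :=
  Cr.lift (crossPartner (fun i => n.getD i 0) (oddPartner (natWord n)))

def crossingSign (l : ℕ) (x : Cr n) : ℤˣ := pairSign (natWord n) l x.pos

variable {n} (hSI : Even (Nat.count (IsOddSI (natWord n)) (natWord n).length))
  (hNSI : Even (Nat.count (IsOddNSI (natWord n)) (natWord n).length))
include hSI hNSI

theorem crossingPairing_spec (x : Cr n) :
    (crossingPairing n x).pos =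
        crossPartner (fun i => n.getD i 0) (oddPartner (natWord n)) x.pos ∧
      crossingPairing n (crossingPairing n x) = x ∧ crossingPairing n x ≠ x := by
  refine Cr.lift_spec (fun y hy => crossPartner_spec (fun i hi => ?_) hy) x
  have := (oddPartner_spec hSI hNSI (i := i) (by rwa [natAbs_getD_natWord])).1
  simpa only [natAbs_getD_natWord] using this

theorem crossingSign_crossingPairing {l : ℕ} (hl : Even (Nat.count (IsOddNSI (natWord n)) l))
    (x : Cr n) : crossingSign n l (crossingPairing n x) = crossingSign n l x := by
  have := pairSign_crossPartner hSI hNSI hl (y := x.pos)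
    (by simpa only [natAbs_getD_natWord] using x.pos_lt)
  simp only [natAbs_getD_natWord] at this
  rw [crossingSign, crossingSign, (crossingPairing_spec hSI hNSI x).1, this]

theorem isPairedResolution_signWord {l : ℕ} (hl2 : Even (n.getD l 0) → 2 ≤ n.getD l 0)
    {g : Cr n → ℤ} (hg1 : ∀ x, g x = 1 ∨ g x = -1)
    (hgf : ∀ x, g (crossingPairing n x) = crossingSign n l x * g x) :
    IsPairedResolution (natWord n) l (signWord n g) := by
  simp only [← natAbs_getD_natWord n] at hl2
  refine isPairedResolution_of_signs (G := Cr.extend g) (fun y hy => ?_) hSI hNSI hl2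
    (fun y hy => ?_) (by simp [signWord, natWord]) (fun i hi => ?_)
  · rw [natAbs_getD_natWord] at hy
    have hcp := (crossingPairing_spec hSI hNSI (Cr.ofPos y hy)).1
    rw [Cr.pos_ofPos] at hcp
    simp only [natAbs_getD_natWord]
    rw [← hcp, Cr.extend_pos, hgf, crossingSign, Cr.pos_ofPos, ← Cr.extend_pos g, Cr.pos_ofPos]
  · rw [natAbs_getD_natWord] at hy
    rw [← Cr.pos_ofPos y hy, Cr.extend_pos]
    exact hg1 _
  · rw [natAbs_getD_natWord]
    exact signWord_getD g (by simpa [natWord] using hi)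

end CrossingPairing

/-- if the syllable sizes `(n_1, …, n_k)` have an even total number of SI
crossings, an even total number of NSI crossings, and the last maximal run of NSI
syllables contains at least one crossing, then the second player can force the resulting
word `w` of the resolution game to satisfy `w ≈ (2)`, `w ≈ (-2)`, or `w ≈ (2, c)` or
`w ≈ (-2, c)` for some integer `c`. -/
theorem second_forces_reduce_to_two (n : List ℕ)
    (hsi : Even (siCrossings (natWord n))) (hnsi : Even (nsiCrossings (natWord n)))
    (hlast : ∃ l r : ℕ, IsLastNSIRun (natWord n) l r ∧
      0 < ∑ j ∈ Finset.Ico l r, n.getD j 0) :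
    CanForce (C := Cr n) 1 (fun p =>
      TEq (result n p) [2] ∨ TEq (result n p) [-2] ∨
      ∃ c : ℤ, TEq (result n p) [2, c] ∨ TEq (result n p) [-2, c]) := by
  obtain ⟨l, r, hrun, hpos⟩ := hlast
  have hSI := (even_siCrossings_iff _).mp hsi
  have hNSI := (even_nsiCrossings_iff _).mp hnsi
  have hl2 : Even (n.getD l 0) → 2 ≤ n.getD l 0 := by
    simpa only [natAbs_getD_natWord] using
      hrun.two_le_of_even (by simpa only [natAbs_getD_natWord] using hpos)
  have hl : 0 < n.getD l 0 := by
    rcases Nat.even_or_odd (n.getD l 0) with he | ho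
    exacts [by have := hl2 he; omega, ho.pos]
  have : Nonempty (Cr n) := ⟨Cr.ofPos (l, 0) hl⟩
  refine (canForce_isPaired (fun x => (crossingPairing_spec hSI hNSI x).2.1)
    (fun x => (crossingPairing_spec hSI hNSI x).2.2)
    (crossingSign_crossingPairing hSI hNSI hrun.even_count)).mono fun p hp hlen hpaired => ?_
  obtain ⟨g, hg, hg1, hgf⟩ := hpaired.exists_sign hp hlen
  rw [result_eq_signWord hp hlen hg]
  exact (isPairedResolution_signWord hSI hNSI hl2 hg1 hgf).reducesToTwo hNSI hrun
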